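/- Let S be an m×m real symmetric positive semidefinite matrix and P an m×m real symmetric matrix with P·P = P and P ≠ I_m, such that S·P = P and the eigenspace {x ∈ ℝ^m : Sx = x} equals the column space of P. Then the largest eigenvalue of the symmetric matrix S − P equals the largest eigenvalue of S among eigenvalues different from 1. -/

import Mathlib

/-!
Transposing `S P = P` gives `P S = P`, so an eigenvector of `S` for `μ ≠ 1` is killed by `P`
and is an eigenvector of `S - P` for `μ`. Conversely `P (S - P) = 0`, so an eigenvector of
`S - P` for `μ ≠ 0` is killed by `P` and is an eigenvector of `S` for `μ`; here `μ ≠ 1`, since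
the fixed vectors of `S` lie in the range of `P`, on which `P` is the identity. Thus the spectrum
of `S - P` is that of `S` without `1`, possibly with `0` added, and adding `0` does not change
the supremum because `S` is positive semidefinite.
-/

open Matrix

theorem Real.sSup_eq_of_subset_of_subset_insert_zero {s t : Set ℝ} (hs : BddAbove s)
    (hts : t ⊆ s) (hst : s ⊆ insert 0 t) (ht : ∀ x ∈ t, 0 ≤ x) : sSup s = sSup t := by
  rcases t.eq_empty_or_nonempty with rfl | hne
  · have hs0 : ∀ x ∈ s, x = 0 := fun x hx => by simpa using hst hx
    rw [Real.sSup_empty]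
    exact le_antisymm (Real.sSup_nonpos fun x hx => (hs0 x hx).le)
      (Real.sSup_nonneg fun x hx => (hs0 x hx).ge)
  · have htb : BddAbove t := hs.mono hts
    have h0t : 0 ≤ sSup t := Real.sSup_nonneg ht
    refine le_antisymm ?_ (csSup_le_csSup hs hne hts)
    calc sSup s ≤ sSup (insert 0 t) := csSup_le_csSup (htb.insert 0) ⟨_, hts hne.some_mem⟩ hst
      _ = sSup t := by rw [csSup_insert htb hne, sup_eq_right.mpr h0t]

namespace Matrix

theorem mulVec_eq_zero_of_mulVec_eq_smul_of_ne_one {n K : Type*} [Fintype n] [Field K]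
    {S P : Matrix n n K} (hPS : P * S = P) {μ : K} {v : n → K} (hv : S *ᵥ v = μ • v)
    (hμ : μ ≠ 1) : P *ᵥ v = 0 := by
  have h : μ • P *ᵥ v = P *ᵥ v := by rw [← mulVec_smul, ← hv, mulVec_mulVec, hPS]
  have h' : (μ - 1) • P *ᵥ v = 0 := by rw [sub_smul, one_smul, h, sub_self]
  exact (smul_eq_zero.mp h').resolve_left (sub_ne_zero.mpr hμ)

variable {n K : Type*} [Fintype n] [DecidableEq n]

theorem mem_spectrum_iff_exists_mulVec_eq_smul [Field K] {A : Matrix n n K} {μ : K} :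
    μ ∈ spectrum K A ↔ ∃ v ≠ 0, A *ᵥ v = μ • v := by
  simp only [← spectrum_toLin', ← Module.End.hasEigenvalue_iff_mem_spectrum,
    Module.End.hasEigenvalue_iff, Submodule.ne_bot_iff, Module.End.mem_eigenspace_iff,
    toLin'_apply]
  exact exists_congr fun v => by tauto

theorem nonneg_of_mem_spectrum_of_dotProduct_mulVec_nonneg [Field K] [LinearOrder K]
    [IsStrictOrderedRing K] {A : Matrix n n K} (hA : ∀ x, 0 ≤ x ⬝ᵥ A *ᵥ x) {μ : K}
    (hμ : μ ∈ spectrum K A) : 0 ≤ μ := by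
  obtain ⟨v, hv0, hv⟩ := mem_spectrum_iff_exists_mulVec_eq_smul.mp hμ
  have hvv : 0 < v ⬝ᵥ v :=
    lt_of_le_of_ne (Finset.sum_nonneg fun i _ => mul_self_nonneg (v i))
      (Ne.symm (dotProduct_self_eq_zero.not.mpr hv0))
  have h := hA v
  rw [hv, dotProduct_smul, smul_eq_mul] at h
  exact (mul_nonneg_iff_of_pos_right hvv).mp h

section Projection

variable [Field K] {S P : Matrix n n K}

theorem spectrum_diff_one_subset_spectrum_sub (hPS : P * S = P) :
    spectrum K S \ {1} ⊆ spectrum K (S - P) := by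
  rintro μ ⟨hμS, hμ1⟩
  obtain ⟨v, hv0, hv⟩ := mem_spectrum_iff_exists_mulVec_eq_smul.mp hμS
  have hPv := mulVec_eq_zero_of_mulVec_eq_smul_of_ne_one hPS hv hμ1
  exact mem_spectrum_iff_exists_mulVec_eq_smul.mpr
    ⟨v, hv0, by rw [sub_mulVec, hv, hPv, sub_zero]⟩

theorem spectrum_sub_subset_insert_zero (hPS : P * S = P) (hPP : P * P = P)
    (hfix : {x | S *ᵥ x = x} ⊆ Set.range P.mulVec) :
    spectrum K (S - P) ⊆ insert 0 (spectrum K S \ {1}) := by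
  intro μ hμ
  obtain ⟨v, hv0, hv⟩ := mem_spectrum_iff_exists_mulVec_eq_smul.mp hμ
  rcases eq_or_ne μ 0 with hμ0 | hμ0
  · exact Or.inl hμ0
  have hPv : P *ᵥ v = 0 := by
    have h : μ • P *ᵥ v = 0 := by
      rw [← mulVec_smul, ← hv, mulVec_mulVec, mul_sub, hPS, hPP, sub_self, zero_mulVec]
    exact (smul_eq_zero.mp h).resolve_left hμ0
  have hSv : S *ᵥ v = μ • v := by rwa [sub_mulVec, hPv, sub_zero] at hv
  refine Or.inr ⟨mem_spectrum_iff_exists_mulVec_eq_smul.mpr ⟨v, hv0, hSv⟩, ?_⟩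
  rintro (rfl : μ = 1)
  obtain ⟨w, rfl⟩ := hfix (show S *ᵥ v = v by rw [hSv, one_smul])
  rw [mulVec_mulVec, hPP] at hPv
  exact hv0 hPv

end Projection

end Matrix

theorem lambdaMax_S_sub_P_eq_lambda2_general
    (m : ℕ) (S P : Matrix (Fin m) (Fin m) ℝ)
    (hSsymm : Sᵀ = S) (hSpsd : ∀ x : Fin m → ℝ, 0 ≤ dotProduct x (S.mulVec x))
    (hPsymm : Pᵀ = P) (hPidem : P * P = P)
    (hSP : S * P = P)
    (heig : {x : Fin m → ℝ | S.mulVec x = x} = Set.range P.mulVec) :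
    sSup (spectrum ℝ (S - P)) = sSup (spectrum ℝ S \ {1}) := by
  have hPS : P * S = P := by rw [← hPsymm, ← hSsymm, ← transpose_mul, hSP]
  exact Real.sSup_eq_of_subset_of_subset_insert_zero (finite_spectrum (S - P)).bddAbove
    (spectrum_diff_one_subset_spectrum_sub hPS)
    (spectrum_sub_subset_insert_zero hPS hPidem heig.le)
    fun μ hμ => nonneg_of_mem_spectrum_of_dotProduct_mulVec_nonneg hSpsd hμ.1

/-- If `S` is symmetric PSD, `P` is a symmetric idempotent with `P ≠ I`, `S P = P`, and
the `1`-eigenspace of `S` equals the column space of `P`, then the largest eigenvalue of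
`S − P` equals the largest eigenvalue of `S` among eigenvalues different from `1`. -/
theorem lambdaMax_S_sub_P_eq_lambda2
    (m : ℕ) (hm : 0 < m) (S P : Matrix (Fin m) (Fin m) ℝ)
    (hSsymm : Sᵀ = S) (hSpsd : ∀ x : Fin m → ℝ, 0 ≤ dotProduct x (S.mulVec x))
    (hPsymm : Pᵀ = P) (hPidem : P * P = P) (hPne : P ≠ 1)
    (hSP : S * P = P)
    (heig : {x : Fin m → ℝ | S.mulVec x = x} = Set.range P.mulVec) :
    sSup (spectrum ℝ (S - P)) = sSup (spectrum ℝ S \ {1}) :=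
  lambdaMax_S_sub_P_eq_lambda2_general m S P hSsymm hSpsd hPsymm hPidem hSP heig
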